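/- Suppose 𝒜 is the smallest field of sets on Ω containing 𝒜_ℒ ∪ 𝒜_ℰ. Then for every statistical model λ on 𝒜_ℰ × ℒ there exists exactly one strategy σ on 𝒜 × ℒ whose restriction to 𝒜_ℰ × ℒ equals λ. -/

import Mathlib

/-!
Minimality of `𝒜` shows that every `F ∈ 𝒜` has, on each `H i`, the same trace as some `B ∈ 𝒜E`:
the events with this property form a field containing `𝒜L` and `𝒜E`. A probability concentrated
on `H i` only sees traces on `H i`, so `σ(F|H i) := λ(B|H i)` is well defined, is a strategy, and
is the value forced on every strategy extending `λ`.
-/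

open Set

open scoped Classical

variable {Ω : Type*}

/-- A field of sets on `Ω`: contains `univ`, closed under complements and finite unions. -/
def IsSetField (𝒜 : Set (Set Ω)) : Prop :=
  Set.univ ∈ 𝒜 ∧ (∀ A ∈ 𝒜, Aᶜ ∈ 𝒜) ∧ ∀ A ∈ 𝒜, ∀ B ∈ 𝒜, A ∪ B ∈ 𝒜

/-- A finitely additive probability on the field `𝒜`. -/
def IsFAP (𝒜 : Set (Set Ω)) (P : Set Ω → ℝ) : Prop :=
  (∀ A ∈ 𝒜, 0 ≤ P A ∧ P A ≤ 1) ∧ P Set.univ = 1 ∧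
    ∀ A ∈ 𝒜, ∀ B ∈ 𝒜, Disjoint A B → P (A ∪ B) = P A + P B

/-- A partition of `Ω` into nonempty pairwise disjoint pieces. -/
def IsPartition {ι : Type*} (H : ι → Set Ω) : Prop :=
  (∀ i, (H i).Nonempty) ∧ (Pairwise fun i j => Disjoint (H i) (H j)) ∧
    (⋃ i, H i) = Set.univ

/-- A field containing every member of the partition `H` and whose members are
unions of members of the partition. -/
def IsFieldOver {ι : Type*} (H : ι → Set Ω) (𝒜L : Set (Set Ω)) : Prop :=
  IsSetField 𝒜L ∧ (∀ i, H i ∈ 𝒜L) ∧ ∀ A ∈ 𝒜L, ∃ S : Set ι, A = ⋃ i ∈ S, H i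

/-- A field containing `𝒜L ∪ 𝒜E` whose members are unions of the atoms `H i ∩ E j`. -/
def IsJointField {ι κ : Type*} (H : ι → Set Ω) (E : κ → Set Ω)
    (𝒜L 𝒜E 𝒜 : Set (Set Ω)) : Prop :=
  IsSetField 𝒜 ∧ 𝒜L ⊆ 𝒜 ∧ 𝒜E ⊆ 𝒜 ∧
    ∀ A ∈ 𝒜, ∃ S : Set (ι × κ), A = ⋃ p ∈ S, H p.1 ∩ E p.2

/-- A strategy on `𝒜 × ℒ`: each `σ (·|H i)` is a finitely additive probability on `𝒜`
equal to `1` on events implied by `H i`. -/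
def IsStrategy {ι : Type*} (𝒜 : Set (Set Ω)) (H : ι → Set Ω) (σ : Set Ω → ι → ℝ) : Prop :=
  ∀ i, IsFAP 𝒜 (fun F => σ F i) ∧ ∀ F ∈ 𝒜, H i ⊆ F → σ F i = 1

/-- A full conditional probability on the field `𝒜` (conditions (C1), (C2), (C3)). -/
def IsFCP (𝒜 : Set (Set Ω)) (P : Set Ω → Set Ω → ℝ) : Prop :=
  (∀ E ∈ 𝒜, ∀ K ∈ 𝒜, K.Nonempty → P E K = P (E ∩ K) K) ∧
  (∀ K ∈ 𝒜, K.Nonempty → IsFAP 𝒜 fun E => P E K) ∧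
  ∀ E ∈ 𝒜, ∀ F ∈ 𝒜, ∀ K ∈ 𝒜, K.Nonempty → (E ∩ K).Nonempty →
    P (E ∩ F) K = P E K * P F (E ∩ K)

/-- `P` extends the prior `π` on `𝒜L` and the strategy `σ` on `𝒜 × ℒ`. -/
def ExtendsPriorStrategy {ι : Type*} (𝒜 𝒜L : Set (Set Ω)) (H : ι → Set Ω)
    (π : Set Ω → ℝ) (σ : Set Ω → ι → ℝ) (P : Set Ω → Set Ω → ℝ) : Prop :=
  (∀ B ∈ 𝒜L, P B Set.univ = π B) ∧ ∀ F ∈ 𝒜, ∀ i, P F (H i) = σ F i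

/-- The set `𝒫` of full conditional probabilities on `𝒜` extending `{π, σ}`. -/
def FCPSet {ι : Type*} (𝒜 𝒜L : Set (Set Ω)) (H : ι → Set Ω)
    (π : Set Ω → ℝ) (σ : Set Ω → ι → ℝ) : Set (Set Ω → Set Ω → ℝ) :=
  {P | IsFCP 𝒜 P ∧ ExtendsPriorStrategy 𝒜 𝒜L H π σ P}

/-- Lower envelope of a set of conditional probabilities at `F|K`. -/
noncomputable def lowEnv (Ps : Set (Set Ω → Set Ω → ℝ)) (F K : Set Ω) : ℝ :=
  sInf ((fun P => P F K) '' Ps)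

/-- Upper envelope of a set of conditional probabilities at `F|K`. -/
noncomputable def upEnv (Ps : Set (Set Ω → Set Ω → ℝ)) (F K : Set Ω) : ℝ :=
  sSup ((fun P => P F K) '' Ps)

/-- A finite partition of `Ω` contained in `𝒜L`. -/
def IsFinPart (𝒜L : Set (Set Ω)) (T : Finset (Set Ω)) : Prop :=
  (↑T : Set (Set Ω)) ⊆ 𝒜L ∧ (∀ A ∈ T, (A : Set Ω).Nonempty) ∧
    (∀ A ∈ T, ∀ B ∈ T, A ≠ B → Disjoint A B) ∧ ⋃₀ (↑T : Set (Set Ω)) = Set.univ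

/-- Lower Stieltjes integral of `X : ℒ → ℝ` with respect to `μ` on `𝒜L`. -/
noncomputable def lowerSInt {ι : Type*} (H : ι → Set Ω) (𝒜L : Set (Set Ω))
    (X : ι → ℝ) (μ : Set Ω → ℝ) : ℝ :=
  sSup {x | ∃ T : Finset (Set Ω), IsFinPart 𝒜L T ∧
    x = ∑ A ∈ T, sInf {y | ∃ i, H i ⊆ A ∧ y = X i} * μ A}

/-- Upper Stieltjes integral of `X : ℒ → ℝ` with respect to `μ` on `𝒜L`. -/
noncomputable def upperSInt {ι : Type*} (H : ι → Set Ω) (𝒜L : Set (Set Ω))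
    (X : ι → ℝ) (μ : Set Ω → ℝ) : ℝ :=
  sInf {x | ∃ T : Finset (Set Ω), IsFinPart 𝒜L T ∧
    x = ∑ A ∈ T, sSup {y | ∃ i, H i ⊆ A ∧ y = X i} * μ A}

/-- `𝒜L`-continuity of a bounded function `X : ℒ → ℝ`. -/
def ALContinuous {ι : Type*} (H : ι → Set Ω) (𝒜L : Set (Set Ω)) (X : ι → ℝ) : Prop :=
  (∃ M : ℝ, ∀ i, |X i| ≤ M) ∧ ∀ t : ℝ, ∀ ε > (0 : ℝ), ∃ A ∈ 𝒜L,
    (⋃ i ∈ {i | t + ε ≤ X i}, H i) ⊆ A ∧ A ⊆ ⋃ i ∈ {i | t ≤ X i}, H i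

/-- Countable additivity of `P` on the field `𝒜`. -/
def CountablyAdditiveOn (𝒜 : Set (Set Ω)) (P : Set Ω → ℝ) : Prop :=
  ∀ A : ℕ → Set Ω, (∀ n, A n ∈ 𝒜) → (Pairwise fun m n => Disjoint (A m) (A n)) →
    (⋃ n, A n) ∈ 𝒜 → HasSum (fun n => P (A n)) (P (⋃ n, A n))

/-- A (normalized) capacity on the field `𝒜`. -/
def IsCapacity (𝒜 : Set (Set Ω)) (φ : Set Ω → ℝ) : Prop :=
  φ ∅ = 0 ∧ φ Set.univ = 1 ∧ (∀ A ∈ 𝒜, 0 ≤ φ A ∧ φ A ≤ 1) ∧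
    ∀ A ∈ 𝒜, ∀ B ∈ 𝒜, A ⊆ B → φ A ≤ φ B

/-- Total monotonicity of a capacity `φ` on the field `𝒜`. -/
def TotallyMonotone (𝒜 : Set (Set Ω)) (φ : Set Ω → ℝ) : Prop :=
  ∀ n : ℕ, 2 ≤ n → ∀ A : Fin n → Set Ω, (∀ i, A i ∈ 𝒜) →
    ∑ s ∈ Finset.univ.powerset.filter (fun s : Finset (Fin n) => s.Nonempty),
      (-1 : ℝ) ^ (s.card - 1) * φ (⋂ i ∈ s, A i) ≤ φ (⋃ i, A i)

/-- Restriction of a conditional probability to the domain `𝒜 × ℬ⁰`, viewed as a point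
of the product space `ℝ^(𝒜 × ℬ⁰)`. -/
def restrictPairs (𝒜 ℬ : Set (Set Ω)) (Q : Set Ω → Set Ω → ℝ)
    (p : {p : Set Ω × Set Ω // p.1 ∈ 𝒜 ∧ p.2 ∈ ℬ ∧ p.2.Nonempty}) : ℝ :=
  Q p.val.1 p.val.2

/-- Restriction of a set function to the domain `𝒜`, viewed as a point of `ℝ^𝒜`. -/
def restrictDom (𝒜 : Set (Set Ω)) (μ : Set Ω → ℝ) (A : {A : Set Ω // A ∈ 𝒜}) : ℝ :=
  μ A.val

/-- The field of all unions of members of the partition `H`, i.e. `⟨ℒ⟩*`. -/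
def unionsOf {ι : Type*} (H : ι → Set Ω) : Set (Set Ω) :=
  {A | ∃ S : Set ι, A = ⋃ i ∈ S, H i}

/-- The set `𝒬^fd` of fully ℒ-disintegrable full conditional probabilities on `𝒜`
extending `{π, σ}`. -/
def QfdSet {ι : Type*} (𝒜 𝒜L : Set (Set Ω)) (H : ι → Set Ω)
    (π : Set Ω → ℝ) (σ : Set Ω → ι → ℝ) : Set (Set Ω → Set Ω → ℝ) :=
  {Q | IsFCP 𝒜 Q ∧ ExtendsPriorStrategy 𝒜 𝒜L H π σ Q ∧
    ∀ F ∈ 𝒜, ∀ K ∈ 𝒜L, K.Nonempty →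
      Q F K = lowerSInt H 𝒜L (fun i => σ F i) fun B => Q B K}

/-- The set `𝒬^fsc` of fully strongly ℒ-conglomerable full conditional probabilities
on `𝒜` extending `{π, σ}`. -/
def QfscSet {ι : Type*} (𝒜 𝒜L : Set (Set Ω)) (H : ι → Set Ω)
    (π : Set Ω → ℝ) (σ : Set Ω → ι → ℝ) : Set (Set Ω → Set Ω → ℝ) :=
  {Q | IsFCP 𝒜 Q ∧ ExtendsPriorStrategy 𝒜 𝒜L H π σ Q ∧
    ∀ F ∈ 𝒜, ∀ K ∈ 𝒜L, K.Nonempty → ∀ B ∈ 𝒜L, B.Nonempty → B ⊆ K →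
      Q B K * sInf {x | ∃ i, H i ⊆ B ∧ x = σ F i} ≤ Q (F ∩ B) K ∧
      Q (F ∩ B) K ≤ Q B K * sSup {x | ∃ i, H i ⊆ B ∧ x = σ F i}}

/-- The set `𝒫^sc` of strongly ℒ-conglomerable joint probabilities consistent with `{π, σ}`. -/
def PscSet {ι : Type*} (𝒜 𝒜L : Set (Set Ω)) (H : ι → Set Ω)
    (π : Set Ω → ℝ) (σ : Set Ω → ι → ℝ) : Set (Set Ω → ℝ) :=
  {μ | (∃ P ∈ FCPSet 𝒜 𝒜L H π σ, μ = fun F => P F Set.univ) ∧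
    ∀ F ∈ 𝒜, ∀ B ∈ 𝒜L, B.Nonempty →
      π B * sInf {x | ∃ i, H i ⊆ B ∧ x = σ F i} ≤ μ (F ∩ B) ∧
      μ (F ∩ B) ≤ π B * sSup {x | ∃ i, H i ⊆ B ∧ x = σ F i}}

/-- The set `𝒫^fd` of fully ℒ-disintegrable conditional probabilities on `𝒜 × 𝒜L⁰`
extending `{π, σ}`. -/
def PfdSet {ι : Type*} (𝒜 𝒜L : Set (Set Ω)) (H : ι → Set Ω)
    (π : Set Ω → ℝ) (σ : Set Ω → ι → ℝ) : Set (Set Ω → Set Ω → ℝ) :=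
  {P | (∀ E ∈ 𝒜, ∀ K ∈ 𝒜L, K.Nonempty → P E K = P (E ∩ K) K) ∧
    (∀ K ∈ 𝒜L, K.Nonempty → IsFAP 𝒜 fun E => P E K) ∧
    (∀ E ∈ 𝒜, ∀ F ∈ 𝒜, ∀ K ∈ 𝒜L, K.Nonempty → E ∩ K ∈ 𝒜L → (E ∩ K).Nonempty →
      P (E ∩ F) K = P E K * P F (E ∩ K)) ∧
    (∀ B ∈ 𝒜L, P B Set.univ = π B) ∧ (∀ F ∈ 𝒜, ∀ i, P F (H i) = σ F i) ∧
    ∀ F ∈ 𝒜, ∀ K ∈ 𝒜L, K.Nonempty →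
      P F K = lowerSInt H 𝒜L (fun i => σ F i) fun B => P B K}

/-- The Choquet integral `C∫ X dφ = ∫₀¹ φ₊((X ≥ t)) dt` of a `[0,1]`-valued `X : ℒ → ℝ`
with respect to a capacity `φ` on `𝒜L`, where `φ₊` is the inner extension of `φ`. -/
noncomputable def choquetInt {ι : Type*} (H : ι → Set Ω) (𝒜L : Set (Set Ω))
    (X : ι → ℝ) (φ : Set Ω → ℝ) : ℝ :=
  ∫ t in (0 : ℝ)..(1 : ℝ),
    sSup {y | ∃ B ∈ 𝒜L, B ⊆ (⋃ i ∈ {i | t ≤ X i}, H i) ∧ y = φ B}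

theorem IsSetField.isSetAlgebra {𝒜 : Set (Set Ω)} (h : IsSetField 𝒜) :
    MeasureTheory.IsSetAlgebra 𝒜 where
  empty_mem := by simpa using h.2.1 _ h.1
  compl_mem _ hs := h.2.1 _ hs
  union_mem _ _ hs ht := h.2.2 _ hs _ ht

section FAP

variable {𝒜 𝒜' : Set (Set Ω)} {μ : Set Ω → ℝ} {A B C : Set Ω}

theorem IsFAP.mono (hμ : IsFAP 𝒜' μ) (h : 𝒜 ⊆ 𝒜') : IsFAP 𝒜 μ :=
  ⟨fun A hA => hμ.1 A (h hA), hμ.2.1, fun A hA B hB => hμ.2.2 A (h hA) B (h hB)⟩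

theorem IsFAP.apply_compl (h𝒜 : IsSetField 𝒜) (hμ : IsFAP 𝒜 μ) (hA : A ∈ 𝒜) :
    μ Aᶜ = 1 - μ A := by
  have := hμ.2.2 A hA Aᶜ (h𝒜.2.1 A hA) disjoint_compl_right
  rw [union_compl_self, hμ.2.1] at this
  linarith

theorem IsFAP.apply_inter_add_apply_diff (h𝒜 : IsSetField 𝒜) (hμ : IsFAP 𝒜 μ)
    (hA : A ∈ 𝒜) (hB : B ∈ 𝒜) : μ (A ∩ B) + μ (A \ B) = μ A := by
  rw [← hμ.2.2 _ (h𝒜.isSetAlgebra.inter_mem hA hB) _ (h𝒜.isSetAlgebra.sdiff_mem hA hB)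
    (disjoint_sdiff_inter.symm), inter_union_sdiff]

theorem IsFAP.apply_eq_of_inter_eq (h𝒜 : IsSetField 𝒜) (hμ : IsFAP 𝒜 μ)
    (hC : ∀ F ∈ 𝒜, C ⊆ F → μ F = 1) (hA : A ∈ 𝒜) (hB : B ∈ 𝒜) (hAB : A ∩ C = B ∩ C) :
    μ A = μ B := by
  have null : ∀ {A B}, A ∈ 𝒜 → B ∈ 𝒜 → A ∩ C = B ∩ C → μ (A \ B) = 0 := by
    intro A B hA hB hAB
    have hAB' := h𝒜.isSetAlgebra.sdiff_mem hA hB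
    have hcompl : μ (A \ B)ᶜ = 1 := hC _ (h𝒜.2.1 _ hAB') fun x hxC hx =>
      hx.2 (((hAB ▸ ⟨hx.1, hxC⟩) : x ∈ B ∩ C).1)
    linarith [hμ.apply_compl h𝒜 hAB']
  have hA' := hμ.apply_inter_add_apply_diff h𝒜 hA hB
  have hB' := hμ.apply_inter_add_apply_diff h𝒜 hB hA
  rw [inter_comm B A, null hB hA hAB.symm] at hB'
  rw [null hA hB hAB] at hA'
  linarith

end FAP

section Trace

variable {𝒜E : Set (Set Ω)} {C : Set Ω}

def traceClass (𝒜E : Set (Set Ω)) (C : Set Ω) : Set (Set Ω) :=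
  {F | ∃ B ∈ 𝒜E, F ∩ C = B ∩ C}

theorem subset_traceClass : 𝒜E ⊆ traceClass 𝒜E C := fun F hF => ⟨F, hF, rfl⟩

theorem IsSetField.traceClass (h : IsSetField 𝒜E) : IsSetField (traceClass 𝒜E C) := by
  refine ⟨subset_traceClass h.1, ?_, ?_⟩
  · rintro F ⟨B, hB, hFB⟩
    refine ⟨Bᶜ, h.2.1 B hB, ?_⟩
    rw [← sdiff_eq_compl_inter, ← sdiff_eq_compl_inter, ← sdiff_inter_self_eq_sdiff, hFB,
      sdiff_inter_self_eq_sdiff]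
  · rintro F ⟨B, hB, hFB⟩ G ⟨D, hD, hGD⟩
    exact ⟨B ∪ D, h.2.2 B hB D hD, by rw [union_inter_distrib_right, union_inter_distrib_right,
      hFB, hGD]⟩

theorem biUnion_mem_traceClass {ι : Type*} {H : ι → Set Ω} (h : IsSetField 𝒜E)
    (hH : Pairwise fun i j => Disjoint (H i) (H j)) (S : Set ι) (i : ι) :
    (⋃ j ∈ S, H j) ∈ traceClass 𝒜E (H i) := by
  by_cases hi : i ∈ S
  · refine ⟨univ, h.1, ?_⟩
    rw [univ_inter, inter_eq_right]
    exact subset_biUnion_of_mem hi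
  · refine ⟨∅, h.isSetAlgebra.empty_mem, ?_⟩
    simp only [empty_inter, iUnion₂_inter, iUnion_eq_empty]
    exact fun j hj => (hH fun hji : j = i => hi (hji ▸ hj)).inter_eq

/-- `μ` at some event of `𝒜E` with the same trace on `C`; the choice is irrelevant when `μ` is
concentrated on `C` (`traceExtension_eq`). -/
noncomputable def traceExtension (𝒜E : Set (Set Ω)) (C : Set Ω) (μ : Set Ω → ℝ)
    (F : Set Ω) : ℝ :=
  if h : F ∈ traceClass 𝒜E C then μ h.choose else 0

variable {μ : Set Ω → ℝ} (h𝒜E : IsSetField 𝒜E) (hμ : IsFAP 𝒜E μ)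
  (hμC : ∀ F ∈ 𝒜E, C ⊆ F → μ F = 1)
include h𝒜E hμ hμC

theorem traceExtension_eq {F B : Set Ω} (hB : B ∈ 𝒜E) (hFB : F ∩ C = B ∩ C) :
    traceExtension 𝒜E C μ F = μ B := by
  have hF : F ∈ traceClass 𝒜E C := ⟨B, hB, hFB⟩
  rw [traceExtension, dif_pos hF]
  exact hμ.apply_eq_of_inter_eq h𝒜E hμC hF.choose_spec.1 hB (hF.choose_spec.2.symm.trans hFB)

theorem traceExtension_of_mem {F : Set Ω} (hF : F ∈ 𝒜E) : traceExtension 𝒜E C μ F = μ F :=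
  traceExtension_eq h𝒜E hμ hμC hF rfl

theorem traceExtension_eq_one {F : Set Ω} (hF : F ∈ traceClass 𝒜E C) (hCF : C ⊆ F) :
    traceExtension 𝒜E C μ F = 1 := by
  obtain ⟨B, hB, hFB⟩ := hF
  rw [traceExtension_eq h𝒜E hμ hμC hB hFB]
  refine hμC B hB fun x hx => ?_
  exact (hFB ▸ ⟨hCF hx, hx⟩ : x ∈ B ∩ C).1

theorem isFAP_traceExtension : IsFAP (traceClass 𝒜E C) (traceExtension 𝒜E C μ) := by
  refine ⟨?_, (traceExtension_of_mem h𝒜E hμ hμC h𝒜E.1).trans hμ.2.1, ?_⟩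
  · rintro F ⟨B, hB, hFB⟩
    rw [traceExtension_eq h𝒜E hμ hμC hB hFB]
    exact hμ.1 B hB
  · rintro F ⟨B, hB, hFB⟩ G ⟨D, hD, hGD⟩ hFG
    -- `D \ B` is a representative of the trace of `G` that is disjoint from `B`.
    have hGDB : G ∩ C = (D \ B) ∩ C := by
      rw [← inter_sdiff_right_comm, ← hGD, eq_comm, sdiff_eq_left]
      exact disjoint_left.2 fun x hx hxB =>
        disjoint_left.1 hFG ((hFB ▸ ⟨hxB, hx.2⟩ : x ∈ F ∩ C).1) hx.1
    have hDB := h𝒜E.isSetAlgebra.sdiff_mem hD hB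
    rw [traceExtension_eq h𝒜E hμ hμC hB hFB, traceExtension_eq h𝒜E hμ hμC hDB hGDB,
      traceExtension_eq h𝒜E hμ hμC (h𝒜E.2.2 B hB _ hDB)
        (by rw [union_inter_distrib_right, union_inter_distrib_right, hFB, hGDB]),
      hμ.2.2 B hB _ hDB disjoint_sdiff_right]

theorem eq_traceExtension {𝒜 : Set (Set Ω)} {ν : Set Ω → ℝ} (h𝒜 : IsSetField 𝒜)
    (hν : IsFAP 𝒜 ν) (hνC : ∀ F ∈ 𝒜, C ⊆ F → ν F = 1) (hsub : 𝒜E ⊆ 𝒜)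
    (htrace : 𝒜 ⊆ traceClass 𝒜E C) (hνμ : ∀ F ∈ 𝒜E, ν F = μ F) {F : Set Ω} (hF : F ∈ 𝒜) :
    ν F = traceExtension 𝒜E C μ F := by
  obtain ⟨B, hB, hFB⟩ := htrace hF
  rw [traceExtension_eq h𝒜E hμ hμC hB hFB, ← hνμ B hB]
  exact hν.apply_eq_of_inter_eq h𝒜 hνC hF (hsub hB) hFB

end Trace

theorem statement0_general {Ω ι κ : Type*} (H : ι → Set Ω) (E : κ → Set Ω)
    (𝒜L 𝒜E 𝒜 : Set (Set Ω))
    (hH : IsPartition H)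
    (h𝒜L : IsFieldOver H 𝒜L) (h𝒜E : IsFieldOver E 𝒜E)
    (h𝒜field : IsSetField 𝒜) (h𝒜sub : 𝒜L ∪ 𝒜E ⊆ 𝒜)
    (h𝒜min : ∀ ℬ : Set (Set Ω), IsSetField ℬ → 𝒜L ∪ 𝒜E ⊆ ℬ → 𝒜 ⊆ ℬ)
    (lam : Set Ω → ι → ℝ) (hlam : IsStrategy 𝒜E H lam) :
    ∃ σ : Set Ω → ι → ℝ,
      (IsStrategy 𝒜 H σ ∧ ∀ F ∈ 𝒜E, ∀ i, σ F i = lam F i) ∧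
      ∀ σ' : Set Ω → ι → ℝ,
        (IsStrategy 𝒜 H σ' ∧ ∀ F ∈ 𝒜E, ∀ i, σ' F i = lam F i) →
        ∀ F ∈ 𝒜, ∀ i, σ' F i = σ F i := by
  have htrace : ∀ i, 𝒜 ⊆ traceClass 𝒜E (H i) := fun i =>
    h𝒜min _ h𝒜E.1.traceClass <| union_subset
      (fun A hA => by
        obtain ⟨S, rfl⟩ := h𝒜L.2.2 A hA
        exact biUnion_mem_traceClass h𝒜E.1 hH.2.1 S i)
      subset_traceClass
  refine ⟨fun F i => traceExtension 𝒜E (H i) (lam · i) F, ⟨fun i => ⟨?_, ?_⟩, ?_⟩, ?_⟩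
  · exact (isFAP_traceExtension h𝒜E.1 (hlam i).1 (hlam i).2).mono (htrace i)
  · exact fun F hF => traceExtension_eq_one h𝒜E.1 (hlam i).1 (hlam i).2 (htrace i hF)
  · exact fun F hF i => traceExtension_of_mem h𝒜E.1 (hlam i).1 (hlam i).2 hF
  · rintro σ' ⟨hσ', hσ'lam⟩ F hF i
    exact eq_traceExtension h𝒜E.1 (hlam i).1 (hlam i).2 h𝒜field (hσ' i).1 (hσ' i).2
      (subset_union_right.trans h𝒜sub) (htrace i) (fun G hG => hσ'lam G hG i) hF

/-- if `𝒜` is the smallest field containing `𝒜L ∪ 𝒜E`, every statistical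
model `lam` on `𝒜E × ℒ` extends to exactly one strategy `σ` on `𝒜 × ℒ`. -/
theorem statement0 {Ω ι κ : Type*} [Nonempty Ω] (H : ι → Set Ω) (E : κ → Set Ω)
    (𝒜L 𝒜E 𝒜 : Set (Set Ω))
    (hH : IsPartition H) (hE : IsPartition E)
    (h𝒜L : IsFieldOver H 𝒜L) (h𝒜E : IsFieldOver E 𝒜E)
    (h𝒜field : IsSetField 𝒜) (h𝒜sub : 𝒜L ∪ 𝒜E ⊆ 𝒜)
    (h𝒜min : ∀ ℬ : Set (Set Ω), IsSetField ℬ → 𝒜L ∪ 𝒜E ⊆ ℬ → 𝒜 ⊆ ℬ)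
    (lam : Set Ω → ι → ℝ) (hlam : IsStrategy 𝒜E H lam) :
    ∃ σ : Set Ω → ι → ℝ,
      (IsStrategy 𝒜 H σ ∧ ∀ F ∈ 𝒜E, ∀ i, σ F i = lam F i) ∧
      ∀ σ' : Set Ω → ι → ℝ,
        (IsStrategy 𝒜 H σ' ∧ ∀ F ∈ 𝒜E, ∀ i, σ' F i = lam F i) →
        ∀ F ∈ 𝒜, ∀ i, σ' F i = σ F i :=
  statement0_general H E 𝒜L 𝒜E 𝒜 hH h𝒜L h𝒜E h𝒜field h𝒜sub h𝒜min lam hlam
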